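/- Lower bound on Shtarkov complexity of the d-dimensional ℓ₁-penalized standard normal location model: for f_X(θ) = (1/2)‖X-θ‖₂² + (d/2)ln(2π) on ℝ^d and γ(θ) = λ‖θ‖₁ with λ > 0, S(γ) := ln ∫ e^{-inf_θ(f_X+γ)} dX = d·ln(2Φ(λ) − 1 + √(2/π)e^{-λ²/2}/λ), and, using the bound Φ(λ) > 1 − 2φ(λ)/(√(2+λ²)+λ) with φ the standard normal density, S(γ) ≥ d·ln(1 + √(2/π)e^{-λ²/2}(1/λ − 2/(√(2+λ²)+λ))). -/

import Mathlib

open MeasureTheory Real Set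

/-- Standard normal CDF. -/
noncomputable def stdNormalCdf (l : ℝ) : ℝ :=
  ∫ y in Set.Iic l, Real.exp (-y ^ 2 / 2) / Real.sqrt (2 * Real.pi)


noncomputable def gg (lam x : ℝ) : ℝ := if |x| ≤ lam then x^2/2 else lam*|x| - lam^2/2

lemma gg_le {lam : ℝ} (hlam : 0 < lam) (x t : ℝ) : gg lam x ≤ (x - t)^2/2 + lam * |t| := by
  unfold gg
  have h1 : x*t ≤ (|x| * |t|) := by rw [← abs_mul]; exact le_abs_self _
  have h2 : |x| ≤ |x - t| + |t| := by
    calc |x| = |(x - t) + t| := by ring_nf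
    _ ≤ |x - t| + |t| := abs_add_le _ _
  have h3 : |x - t|^2 = (x-t)^2 := sq_abs _
  split_ifs with h
  · nlinarith [abs_nonneg t, sq_nonneg t]
  · push_neg at h
    nlinarith [abs_nonneg (x - t), sq_nonneg (|x - t| - lam)]

lemma gg_attained {lam : ℝ} (hlam : 0 < lam) (x : ℝ) :
    ∃ t : ℝ, (x - t)^2/2 + lam * |t| = gg lam x := by
  unfold gg
  rcases le_or_gt (|x|) lam with h | h
  · exact ⟨0, by simp [h]⟩
  · rw [if_neg (not_le.2 h)]
    rcases le_or_gt 0 x with hx | hx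
    · refine ⟨x - lam, ?_⟩
      rw [abs_of_nonneg hx] at h ⊢
      rw [abs_of_nonneg (by linarith)]
      ring
    · refine ⟨x + lam, ?_⟩
      rw [abs_of_neg hx] at h ⊢
      rw [abs_of_nonpos (by linarith)]
      ring

lemma gg_lb {lam : ℝ} (x : ℝ) : lam * |x| - lam^2/2 ≤ gg lam x := by
  unfold gg; split_ifs with h
  · nlinarith [sq_nonneg (|x| - lam), sq_abs x]
  · exact le_refl _

lemma iInf_eq {d : ℕ} {lam : ℝ} (hlam : 0 < lam) (X : Fin d → ℝ) :
    (⨅ θ : Fin d → ℝ, ((∑ i, (X i - θ i) ^ 2) / 2 + d / 2 * Real.log (2 * Real.pi)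
        + lam * ∑ i, |θ i|))
      = ∑ i, gg lam (X i) + d / 2 * Real.log (2 * Real.pi) := by
  have key : ∀ θ : Fin d → ℝ, (∑ i, (X i - θ i) ^ 2) / 2 + d / 2 * Real.log (2 * Real.pi)
        + lam * ∑ i, |θ i|
      = ∑ i, ((X i - θ i)^2/2 + lam * |θ i|) + d / 2 * Real.log (2 * Real.pi) := by
    intro θ; rw [Finset.sum_add_distrib, ← Finset.sum_div, ← Finset.mul_sum]; ring
  have lb : ∀ θ : Fin d → ℝ, ∑ i, gg lam (X i) + d / 2 * Real.log (2 * Real.pi)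
      ≤ (∑ i, (X i - θ i) ^ 2) / 2 + d / 2 * Real.log (2 * Real.pi) + lam * ∑ i, |θ i| := by
    intro θ; rw [key θ]
    exact add_le_add (Finset.sum_le_sum fun i _ => gg_le hlam (X i) (θ i)) le_rfl
  apply le_antisymm
  · choose t ht using fun i => gg_attained hlam (X i)
    have : (∑ i, (X i - t i) ^ 2) / 2 + d / 2 * Real.log (2 * Real.pi) + lam * ∑ i, |t i|
        = ∑ i, gg lam (X i) + d / 2 * Real.log (2 * Real.pi) := by
      rw [key t]
      congr 1
      exact Finset.sum_congr rfl fun i _ => ht i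
    exact (ciInf_le ⟨_, by rintro y ⟨θ, rfl⟩; exact lb θ⟩ t).trans_eq this
  · exact le_ciInf lb

lemma gg_even (lam x : ℝ) : gg lam (-x) = gg lam x := by unfold gg; rw [abs_neg, neg_pow]; ring_nf

lemma expgg_eqOn_Ioi {lam : ℝ} (hlam : 0 < lam) :
    Set.EqOn (fun x => Real.exp (lam^2/2) * Real.exp (-(lam * x)))
      (fun x => Real.exp (-gg lam x)) (Ioi lam) := by
  intro x hx
  simp only [Set.mem_Ioi] at hx
  have hax : |x| = x := abs_of_pos (hlam.trans hx)
  simp only [gg, hax, if_neg (not_le.2 hx), ← Real.exp_add]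
  ring_nf

lemma integrableOn_expgg_Ioi {lam : ℝ} (hlam : 0 < lam) :
    IntegrableOn (fun x => Real.exp (-gg lam x)) (Ioi lam) := by
  refine IntegrableOn.congr_fun ?_ (expgg_eqOn_Ioi hlam) measurableSet_Ioi
  have := (exp_neg_integrableOn_Ioi lam hlam).const_mul (Real.exp (lam^2/2))
  simp only [neg_mul] at this
  exact this

lemma integral_expgg_Ioi {lam : ℝ} (hlam : 0 < lam) :
    ∫ x in Ioi lam, Real.exp (-gg lam x) = Real.exp (-lam^2/2) / lam := by
  rw [← setIntegral_congr_fun measurableSet_Ioi (expgg_eqOn_Ioi hlam)]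
  rw [MeasureTheory.integral_const_mul]
  have : ∫ x in Ioi lam, Real.exp (-(lam * x)) = lam⁻¹ • ∫ x in Ioi (lam * lam), Real.exp (-x) :=
    integral_comp_mul_left_Ioi (fun y => Real.exp (-y)) lam hlam
  rw [this, integral_exp_neg_Ioi, smul_eq_mul, mul_comm lam⁻¹, ← mul_assoc, ← Real.exp_add]
  rw [div_eq_mul_inv]
  ring_nf

lemma integrableOn_expgg_Iic {lam : ℝ} (hlam : 0 < lam) :
    IntegrableOn (fun x => Real.exp (-gg lam x)) (Iic (-lam)) := by
  have h1 : IntegrableOn (fun x => Real.exp (-gg lam x)) (Ici lam) := by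
    rw [integrableOn_Ici_iff_integrableOn_Ioi]
    exact integrableOn_expgg_Ioi hlam
  have h2 := (measurableEmbedding_neg (α := ℝ)).integrableOn_map_iff
    (f := fun x => Real.exp (-gg lam x)) (s := Ici lam) (μ := volume)
  rw [Measure.map_neg_eq_self] at h2
  have h3 := h2.1 h1
  have h4 : (fun x : ℝ => -x) ⁻¹' Ici lam = Iic (-lam) := by
    ext x; simp [neg_le]
  rw [h4] at h3
  refine h3.congr_fun (fun x _ => ?_) measurableSet_Iic
  simp only [Function.comp, gg_even]

lemma integral_expgg_Iic {lam : ℝ} (hlam : 0 < lam) :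
    ∫ x in Iic (-lam), Real.exp (-gg lam x) = Real.exp (-lam^2/2) / lam := by
  have h5 := integral_comp_neg_Iic (-lam) (fun y => Real.exp (-gg lam y))
  simp only [gg_even, neg_neg] at h5
  rw [h5, integral_expgg_Ioi hlam]

lemma integral_gauss_total : ∫ x : ℝ, Real.exp (-x^2/2) = Real.sqrt (2 * Real.pi) := by
  have h : ∀ x : ℝ, -x^2/2 = -2⁻¹ * x^2 := fun x => by ring
  simp_rw [h]
  rw [integral_gaussian]
  congr 1
  ring

lemma integrable_gauss : Integrable (fun x : ℝ => Real.exp (-x^2/2)) := by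
  have h : ∀ x : ℝ, -x^2/2 = -2⁻¹ * x^2 := fun x => by ring
  simp_rw [h]; exact integrable_exp_neg_mul_sq (by norm_num)

lemma stdNormalCdf_eq (l : ℝ) :
    stdNormalCdf l = (∫ x in Iic l, Real.exp (-x^2/2)) / Real.sqrt (2*Real.pi) := by
  rw [stdNormalCdf, integral_div]

lemma gauss_Iic_neg (lam : ℝ) :
    ∫ x in Iic (-lam), Real.exp (-x^2/2) = ∫ x in Ioi lam, Real.exp (-x^2/2) := by
  have h5 := integral_comp_neg_Iic (-lam) (fun y : ℝ => Real.exp (-y^2/2))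
  simp only [neg_neg] at h5
  rw [← h5]
  refine setIntegral_congr_fun measurableSet_Iic (fun x _ => ?_)
  congr 1
  ring

lemma gauss_split (lam : ℝ) :
    (∫ x in Iic lam, Real.exp (-x^2/2)) + ∫ x in Ioi lam, Real.exp (-x^2/2)
      = Real.sqrt (2*Real.pi) := by
  rw [intervalIntegral.integral_Iic_add_Ioi integrable_gauss.integrableOn integrable_gauss.integrableOn,
    integral_gauss_total]

lemma integral_expgg {lam : ℝ} (hlam : 0 < lam) :
    ∫ x, Real.exp (-gg lam x)
      = Real.sqrt (2*Real.pi) * (2 * stdNormalCdf lam - 1) + 2 * Real.exp (-lam^2/2) / lam := by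
  have hmid_eq : Set.EqOn (fun x => Real.exp (-x^2/2)) (fun x => Real.exp (-gg lam x))
      (Ioc (-lam) lam) := by
    intro x hx
    simp only [Set.mem_Ioc] at hx
    have : |x| ≤ lam := abs_le.2 ⟨hx.1.le, hx.2⟩
    simp only [gg, if_pos this]
    congr 1
    ring
  have hmid : IntegrableOn (fun x => Real.exp (-gg lam x)) (Ioc (-lam) lam) :=
    IntegrableOn.congr_fun integrable_gauss.integrableOn hmid_eq measurableSet_Ioc
  have hIic : IntegrableOn (fun x => Real.exp (-gg lam x)) (Iic lam) := by
    have := (integrableOn_expgg_Iic hlam).union hmid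
    rwa [Iic_union_Ioc_eq_Iic (by linarith : -lam ≤ lam)] at this
  rw [← intervalIntegral.integral_Iic_add_Ioi hIic (integrableOn_expgg_Ioi hlam), integral_expgg_Ioi hlam]
  have hsplit : ∫ x in Iic lam, Real.exp (-gg lam x)
      = (∫ x in Iic (-lam), Real.exp (-gg lam x)) + ∫ x in Ioc (-lam) lam, Real.exp (-gg lam x) := by
    rw [← setIntegral_union (Iic_disjoint_Ioc le_rfl) measurableSet_Ioc
      (integrableOn_expgg_Iic hlam) hmid, Iic_union_Ioc_eq_Iic (by linarith : -lam ≤ lam)]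
  rw [hsplit, integral_expgg_Iic hlam,
    ← setIntegral_congr_fun measurableSet_Ioc hmid_eq]
  have hIocg : ∫ x in Ioc (-lam) lam, Real.exp (-x^2/2)
      = (∫ x in Iic lam, Real.exp (-x^2/2)) - ∫ x in Iic (-lam), Real.exp (-x^2/2) := by
    rw [eq_sub_iff_add_eq, add_comm, ← setIntegral_union (Iic_disjoint_Ioc le_rfl) measurableSet_Ioc
      integrable_gauss.integrableOn integrable_gauss.integrableOn,
      Iic_union_Ioc_eq_Iic (by linarith : -lam ≤ lam)]
  rw [hIocg, gauss_Iic_neg]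
  have h1 := gauss_split lam
  rw [stdNormalCdf_eq]
  have hs : (0:ℝ) < Real.sqrt (2*Real.pi) := Real.sqrt_pos.2 (by positivity)
  have hkey : Real.sqrt (2*Real.pi) * (2 * ((∫ x in Iic lam, Real.exp (-x^2/2))
      / Real.sqrt (2*Real.pi)) - 1) = 2 * (∫ x in Iic lam, Real.exp (-x^2/2))
        - Real.sqrt (2*Real.pi) := by
    field_simp
  rw [hkey]
  have h2 : 2 * Real.exp (-lam^2/2)/lam = Real.exp (-lam^2/2)/lam + Real.exp (-lam^2/2)/lam := by
    ring
  linarith [h1, h2]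

noncomputable def Gk (x : ℝ) : ℝ := Real.exp (-x^2/2) * (Real.sqrt (x^2+2) - x)

noncomputable def Gk' (x : ℝ) : ℝ :=
  (Real.exp (-x^2/2) * (-x)) * (Real.sqrt (x^2+2) - x)
    + Real.exp (-x^2/2) * (2*x/(2*Real.sqrt (x^2+2)) - 1)

lemma sqrt_sq_add_two (x : ℝ) : (Real.sqrt (x^2+2))^2 = x^2+2 :=
  Real.sq_sqrt (by positivity)

lemma sqrt_sq_add_two_pos (x : ℝ) : 0 < Real.sqrt (x^2+2) :=
  Real.sqrt_pos.2 (by positivity)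

lemma le_sqrt_sq_add_two (x : ℝ) : x ≤ Real.sqrt (x^2+2) := by
  rcases le_or_gt x 0 with h | h
  · exact h.trans (sqrt_sq_add_two_pos x).le
  · nlinarith [sqrt_sq_add_two x, sqrt_sq_add_two_pos x]

lemma Gk_hasDeriv (x : ℝ) : HasDerivAt Gk (Gk' x) x := by
  have h1 : HasDerivAt (fun x : ℝ => -x^2/2) (-x) x := by
    have := ((hasDerivAt_pow 2 x).neg).div_const 2
    refine this.congr_deriv ?_
    simp; ring
  have hexp := h1.exp
  have h2 : HasDerivAt (fun x : ℝ => x^2+2) (2*x) x := by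
    have := (hasDerivAt_pow 2 x).add_const 2
    refine this.congr_deriv ?_
    simp
  have hs := h2.sqrt (by positivity)
  have := hexp.mul (hs.sub (hasDerivAt_id x))
  exact this

lemma Gk'_le {x : ℝ} (hx : 0 < x) : Real.exp (-x^2/2) ≤ -Gk' x := by
  set s := Real.sqrt (x^2+2) with hsdef
  have hs2 : s^2 = x^2+2 := sqrt_sq_add_two x
  have hsp : 0 < s := sqrt_sq_add_two_pos x
  have hxs : x * s ≤ x^2 + 1 := by nlinarith [sq_nonneg (s - x)]
  have hdiv : x / s ≤ x*s - x^2 := by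
    rw [div_le_iff₀ hsp]
    nlinarith
  have hE : 0 < Real.exp (-x^2/2) := Real.exp_pos _
  have : -Gk' x = Real.exp (-x^2/2) * (x*s - x^2 + 1 - x/s) := by
    unfold Gk'
    rw [← hsdef]
    field_simp
    ring
  rw [this]
  nlinarith [hdiv]

lemma Gk'_abs_le {x : ℝ} (hx : 0 < x) : |Gk' x| ≤ 3 * Real.exp (-x^2/2) := by
  set s := Real.sqrt (x^2+2) with hsdef
  have hs2 : s^2 = x^2+2 := sqrt_sq_add_two x
  have hsp : 0 < s := sqrt_sq_add_two_pos x
  have hxls : x ≤ s := le_sqrt_sq_add_two x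
  have hE : 0 < Real.exp (-x^2/2) := Real.exp_pos _
  have h1 : x * (s - x) ≤ 2 := by nlinarith
  have h2 : 0 ≤ 1 - x/s := by
    rw [sub_nonneg, div_le_one hsp]; exact hxls
  have h3 : 1 - x/s ≤ 1 := by
    have : 0 ≤ x/s := by positivity
    linarith
  have hG : Gk' x = -(Real.exp (-x^2/2) * (x*(s-x) + (1 - x/s))) := by
    unfold Gk'
    rw [← hsdef]
    field_simp
    ring
  rw [hG, abs_neg, abs_of_nonneg (by nlinarith [mul_nonneg hx.le (sub_nonneg.2 hxls)])]
  nlinarith [mul_nonneg hx.le (sub_nonneg.2 hxls)]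

lemma Gk_nonneg (x : ℝ) : 0 ≤ Gk x :=
  mul_nonneg (Real.exp_pos _).le (sub_nonneg.2 (le_sqrt_sq_add_two x))

lemma Gk_tendsto : Filter.Tendsto Gk Filter.atTop (nhds 0) := by
  have hb : ∀ x : ℝ, 1 ≤ x → Gk x ≤ 2 / x := by
    intro x hx
    have hsp : 0 < Real.sqrt (x^2+2) := sqrt_sq_add_two_pos x
    have hx0 : 0 < x := by linarith
    have h1 : Real.sqrt (x^2+2) - x ≤ 2 / x := by
      rw [sub_le_iff_le_add]
      calc Real.sqrt (x^2+2) ≤ Real.sqrt ((2/x + x)^2) := by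
            apply Real.sqrt_le_sqrt
            have e : (2/x + x)^2 = 4/x^2 + 4 + x^2 := by field_simp; ring
            have e2 : (0:ℝ) ≤ 4/x^2 := by positivity
            linarith
        _ = 2/x + x := Real.sqrt_sq (by positivity)
    have h2 : Real.exp (-x^2/2) ≤ 1 := Real.exp_le_one_iff.2 (by nlinarith)
    calc Gk x ≤ 1 * (2/x) :=
          mul_le_mul h2 h1 (by linarith [le_sqrt_sq_add_two x]) zero_le_one
      _ = 2 / x := one_mul _
  refine squeeze_zero' (g := fun x => 2 / x) (Filter.Eventually.of_forall Gk_nonneg) ?_ ?_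
  · filter_upwards [Filter.eventually_ge_atTop 1] with x hx using hb x hx
  · exact Filter.Tendsto.div_atTop tendsto_const_nhds Filter.tendsto_id

lemma Gk'_integrableOn {lam : ℝ} (hlam : 0 < lam) : IntegrableOn Gk' (Ioi lam) := by
  have hmeas : Measurable Gk' := by
    unfold Gk'
    fun_prop
  have hbound : Integrable (fun x : ℝ => 3 * Real.exp (-x^2/2)) := integrable_gauss.const_mul 3
  refine Integrable.mono' (hbound.integrableOn) hmeas.aestronglyMeasurable.restrict ?_
  filter_upwards [ae_restrict_mem measurableSet_Ioi] with x hx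
  rw [Real.norm_eq_abs]
  exact Gk'_abs_le (hlam.trans hx)

lemma komatu {lam : ℝ} (hlam : 0 < lam) :
    ∫ x in Ioi lam, Real.exp (-x^2/2)
      ≤ Real.exp (-lam^2/2) * (Real.sqrt (lam^2+2) - lam) := by
  have hftc : ∫ x in Ioi lam, Gk' x = 0 - Gk lam :=
    integral_Ioi_of_hasDerivAt_of_tendsto' (fun x _ => Gk_hasDeriv x)
      (Gk'_integrableOn hlam) Gk_tendsto
  have hmono : ∫ x in Ioi lam, Real.exp (-x^2/2) ≤ ∫ x in Ioi lam, -Gk' x := by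
    refine setIntegral_mono_on integrable_gauss.integrableOn
      (Gk'_integrableOn hlam).neg measurableSet_Ioi ?_
    intro x hx
    exact Gk'_le (hlam.trans hx)
  rw [integral_neg, hftc] at hmono
  simpa [Gk] using hmono

lemma sqrt_two_pi_mul_sqrt_two_div_pi : Real.sqrt (2*Real.pi) * Real.sqrt (2/Real.pi) = 2 := by
  rw [← Real.sqrt_mul (by positivity)]
  rw [show (2*Real.pi) * (2/Real.pi) = 4 by field_simp; ring]
  rw [show (4:ℝ) = 2^2 by norm_num, Real.sqrt_sq (by norm_num)]

/-- Lower bound on the Shtarkov complexity of the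
`d`-dimensional ℓ₁-penalized standard normal location model:
`S(γ) = d ln(2Φ(λ) - 1 + √(2/π)e^{-λ²/2}/λ)` and, via the Komatu bound on `Φ`,
`S(γ) ≥ d ln(1 + √(2/π)e^{-λ²/2}(1/λ - 2/(√(2+λ²)+λ)))`. -/
theorem shtarkov_gaussian_l1_lower_bound {d : ℕ} (lam : ℝ) (hlam : 0 < lam) :
    Real.log (∫ X : Fin d → ℝ, Real.exp (-(⨅ θ : Fin d → ℝ,
          ((∑ i, (X i - θ i) ^ 2) / 2 + d / 2 * Real.log (2 * Real.pi)
            + lam * ∑ i, |θ i|))))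
        = d * Real.log (2 * stdNormalCdf lam - 1
            + Real.sqrt (2 / Real.pi) * Real.exp (-lam ^ 2 / 2) / lam) ∧
    d * Real.log (1 + Real.sqrt (2 / Real.pi) * Real.exp (-lam ^ 2 / 2)
          * (1 / lam - 2 / (Real.sqrt (2 + lam ^ 2) + lam)))
      ≤ Real.log (∫ X : Fin d → ℝ, Real.exp (-(⨅ θ : Fin d → ℝ,
          ((∑ i, (X i - θ i) ^ 2) / 2 + d / 2 * Real.log (2 * Real.pi)
            + lam * ∑ i, |θ i|)))) := by
  have hpi : (0:ℝ) < Real.pi := Real.pi_pos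
  set Phi := stdNormalCdf lam with hPhi
  set E := Real.exp (-lam^2/2) with hE
  have hE' : Real.exp (-lam^2/2) = E := rfl
  set T : ℝ := 2 * Phi - 1 + Real.sqrt (2 / Real.pi) * E / lam with hT
  set C : ℝ := (d:ℝ) / 2 * Real.log (2 * Real.pi) with hC
  -- the integral equals T ^ d
  have hI : (∫ X : Fin d → ℝ, Real.exp (-(⨅ θ : Fin d → ℝ,
      ((∑ i, (X i - θ i) ^ 2) / 2 + d / 2 * Real.log (2 * Real.pi)
        + lam * ∑ i, |θ i|)))) = T ^ d := by
    have h1 : ∀ X : Fin d → ℝ,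
        Real.exp (-(⨅ θ : Fin d → ℝ,
          ((∑ i, (X i - θ i) ^ 2) / 2 + d / 2 * Real.log (2 * Real.pi)
            + lam * ∑ i, |θ i|)))
        = Real.exp (-C) * ∏ i, Real.exp (-gg lam (X i)) := by
      intro X
      rw [iInf_eq hlam X, ← Real.exp_sum, ← Real.exp_add]
      congr 1
      rw [← hC]
      rw [Finset.sum_neg_distrib]
      ring
    simp_rw [h1]
    rw [MeasureTheory.integral_const_mul,
      MeasureTheory.volume_pi, MeasureTheory.integral_fintype_prod_eq_pow (ι := Fin d) (fun x => Real.exp (-gg lam x)),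
      Fintype.card_fin, integral_expgg hlam]
    have hJT : Real.sqrt (2*Real.pi) * (2 * stdNormalCdf lam - 1) + 2 * Real.exp (-lam^2/2) / lam
        = Real.sqrt (2*Real.pi) * T := by
      rw [hT, hPhi, hE, mul_add]
      congr 1
      rw [show Real.sqrt (2*Real.pi) * (Real.sqrt (2/Real.pi) * Real.exp (-lam^2/2) / lam)
          = (Real.sqrt (2*Real.pi) * Real.sqrt (2/Real.pi)) * (Real.exp (-lam^2/2) / lam) from by
            ring,
        sqrt_two_pi_mul_sqrt_two_div_pi]
      ring
    rw [hJT, mul_pow]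
    have hsd : (Real.sqrt (2*Real.pi))^d = Real.exp C := by
      rw [← Real.exp_log (Real.sqrt_pos.2 (show (0:ℝ) < 2*Real.pi by positivity)),
        ← Real.exp_nat_mul, Real.log_sqrt (by positivity)]
      rw [hC]
      congr 1
      ring
    rw [hsd, ← mul_assoc, ← Real.exp_add, neg_add_cancel, Real.exp_zero, one_mul]
  rw [hI, Real.log_pow]
  refine ⟨rfl, ?_⟩
  -- the inequality
  set s := Real.sqrt (2 + lam^2) with hs
  have hs2 : s^2 = 2 + lam^2 := Real.sq_sqrt (by positivity)
  have hsp : 0 < s := Real.sqrt_pos.2 (by positivity)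
  have hsl : lam ≤ s := by nlinarith
  have hsum : 0 < s + lam := by linarith
  have hEp : 0 < E := Real.exp_pos _
  have hq : 0 < Real.sqrt (2 / Real.pi) := Real.sqrt_pos.2 (by positivity)
  set L : ℝ := 1 + Real.sqrt (2 / Real.pi) * E * (1 / lam - 2 / (s + lam)) with hL
  have hdiffpos : 0 ≤ 1 / lam - 2 / (s + lam) := by
    rw [sub_nonneg, div_le_div_iff₀ hsum hlam]
    nlinarith
  have hL0 : 0 < L := by
    rw [hL]
    have h0 : 0 ≤ Real.sqrt (2 / Real.pi) * E * (1 / lam - 2 / (s + lam)) := by positivity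
    linarith
  have hLT : L ≤ T := by
    have hkom := komatu hlam
    rw [show lam^2 + 2 = 2 + lam^2 by ring, ← hs, ← hE] at hkom
    have hs2pi : 0 < Real.sqrt (2*Real.pi) := Real.sqrt_pos.2 (by positivity)
    have hPhi_eq : Phi = 1 - (∫ x in Ioi lam, Real.exp (-x^2/2)) / Real.sqrt (2*Real.pi) := by
      rw [hPhi, stdNormalCdf_eq,
        show (∫ x in Iic lam, Real.exp (-x^2/2))
          = Real.sqrt (2*Real.pi) - ∫ x in Ioi lam, Real.exp (-x^2/2) from by
            linarith [gauss_split lam],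
        sub_div, div_self hs2pi.ne']
    have hq2 : Real.sqrt (2 / Real.pi) = 2 / Real.sqrt (2*Real.pi) := by
      rw [eq_div_iff hs2pi.ne', mul_comm]
      exact sqrt_two_pi_mul_sqrt_two_div_pi
    have hsl2 : s - lam = 2 / (s + lam) := by
      rw [eq_div_iff hsum.ne']
      nlinarith
    have hkey : 1 - Phi ≤ Real.sqrt (2 / Real.pi) * E / (s + lam) := by
      have h2 : Real.sqrt (2 / Real.pi) * E / (s + lam)
          = E * (s - lam) / Real.sqrt (2*Real.pi) := by
        rw [hq2, hsl2]
        field_simp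
      rw [hPhi_eq, h2]
      have h4 : (∫ x in Ioi lam, Real.exp (-x^2/2)) / Real.sqrt (2*Real.pi)
          ≤ E * (s - lam) / Real.sqrt (2*Real.pi) := by
        gcongr
      linarith
    have hexp : Real.sqrt (2 / Real.pi) * E * (1 / lam - 2 / (s + lam))
        = Real.sqrt (2 / Real.pi) * E / lam
          - 2 * (Real.sqrt (2 / Real.pi) * E / (s + lam)) := by ring
    rw [hT, hL]
    linarith [hkey, hexp]
  calc (d:ℝ) * Real.log L ≤ (d:ℝ) * Real.log T :=
        mul_le_mul_of_nonneg_left (Real.log_le_log hL0 hLT) (Nat.cast_nonneg d)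
    _ = _ := rfl
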